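/- Let q₁, q₂, F be polynomials in ℂ[x₀, x₁, x₂, x₃, x₄] such that q₁, q₂ involve only the variables x₂, x₃, x₄, F involves only x₁, x₂, x₃, x₄, and substituting x₁ ↦ 0 in F yields q₂². Let G = x₀² + x₀q₁ + q₂ and H = x₀⁴ + 2x₀³q₁ + x₀²(q₁² + 2q₂) + 2x₀q₁q₂ + F. Then for every point p ∈ ℂ⁵, one has (p₀·p₁ = 0 and H(p) = 0) if and only if (p₀ = 0 and F(p) = 0) or (p₁ = 0 and G(p) = 0). In other words, the common zero locus of the quadric x₀x₁ = 0 and the quartic H = 0 is the union of the surface {x₀ = 0, F = 0} and the surface {x₁ = 0, G = 0}. -/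
import Mathlib


open MvPolynomial

lemma eval_F_of_p1_zero (F q₂ : MvPolynomial (Fin 5) ℂ)
    (hFq₂ : MvPolynomial.aeval
        (fun i : Fin 5 => if i = 1 then 0 else (X i : MvPolynomial (Fin 5) ℂ)) F
      = q₂ ^ 2)
    (p : Fin 5 → ℂ) (hp1 : p 1 = 0) :
    MvPolynomial.eval p F = (MvPolynomial.eval p q₂) ^ 2 := by
  have h := congrArg (MvPolynomial.eval p) hFq₂
  rw [show (MvPolynomial.eval p) ((MvPolynomial.aeval
      (fun i : Fin 5 => if i = 1 then 0 else (X i : MvPolynomial (Fin 5) ℂ))) F)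
      = MvPolynomial.eval (fun i : Fin 5 => if i = 1 then 0 else p i) F from by
    rw [MvPolynomial.aeval_eq_eval₂Hom, MvPolynomial.coe_eval₂Hom,
      MvPolynomial.eval_eval₂]
    rw [show ((MvPolynomial.eval p).comp (algebraMap ℂ (MvPolynomial (Fin 5) ℂ)))
        = RingHom.id ℂ from by ext x; simp,
      show (fun s : Fin 5 => (MvPolynomial.eval p)
          (if s = 1 then 0 else (X s : MvPolynomial (Fin 5) ℂ)))
        = (fun i : Fin 5 => if i = 1 then 0 else p i) from
        funext fun j => by by_cases hj : j = 1 <;> simp [hj]]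
    exact MvPolynomial.eval₂_id _] at h
  have hfun : (fun i : Fin 5 => if i = 1 then 0 else p i) = p := by
    funext i; by_cases hi : i = 1 <;> simp [hi, hp1]
  rw [hfun] at h
  simpa using h

/-- If `q₁, q₂` involve only `x₂, x₃, x₄`, `F` involves only `x₁, x₂, x₃, x₄`, and
substituting `x₁ ↦ 0` in `F` yields `q₂²`, then setting
`G = x₀² + x₀q₁ + q₂` and `H = x₀⁴ + 2x₀³q₁ + x₀²(q₁² + 2q₂) + 2x₀q₁q₂ + F`,
for every `p ∈ ℂ⁵` one has `p₀·p₁ = 0 ∧ H(p) = 0` iff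
`(p₀ = 0 ∧ F(p) = 0) ∨ (p₁ = 0 ∧ G(p) = 0)`. -/
theorem quadric_quartic_zero_locus_decomposition
    (q₁ q₂ F : MvPolynomial (Fin 5) ℂ)
    (hq₁v : q₁.vars ⊆ {2, 3, 4}) (hq₂v : q₂.vars ⊆ {2, 3, 4})
    (hFv : F.vars ⊆ {1, 2, 3, 4})
    (hFq₂ : MvPolynomial.aeval
        (fun i : Fin 5 => if i = 1 then 0 else (X i : MvPolynomial (Fin 5) ℂ)) F
      = q₂ ^ 2)
    (p : Fin 5 → ℂ) :
    (p 0 * p 1 = 0 ∧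
        MvPolynomial.eval p
          (X 0 ^ 4 + 2 * X 0 ^ 3 * q₁ + X 0 ^ 2 * (q₁ ^ 2 + 2 * q₂)
            + 2 * X 0 * q₁ * q₂ + F) = 0) ↔
      ((p 0 = 0 ∧ MvPolynomial.eval p F = 0) ∨
        (p 1 = 0 ∧
          MvPolynomial.eval p (X 0 ^ 2 + X 0 * q₁ + q₂ : MvPolynomial (Fin 5) ℂ) = 0)) := by
  set a := p 0
  set f := MvPolynomial.eval p F
  set g1 := MvPolynomial.eval p q₁
  set g2 := MvPolynomial.eval p q₂
  have hH : MvPolynomial.eval p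
      (X 0 ^ 4 + 2 * X 0 ^ 3 * q₁ + X 0 ^ 2 * (q₁ ^ 2 + 2 * q₂)
        + 2 * X 0 * q₁ * q₂ + F)
      = a ^ 4 + 2 * a ^ 3 * g1 + a ^ 2 * (g1 ^ 2 + 2 * g2) + 2 * a * g1 * g2 + f := by
    simp [a, f, g1, g2]
  have hG : MvPolynomial.eval p (X 0 ^ 2 + X 0 * q₁ + q₂ : MvPolynomial (Fin 5) ℂ)
      = a ^ 2 + a * g1 + g2 := by simp [a, g1, g2]
  rw [hH, hG]
  constructor
  · rintro ⟨hab, hH0⟩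
    rcases mul_eq_zero.mp hab with ha | hb
    · left; refine ⟨ha, ?_⟩
      rw [ha] at hH0; linear_combination hH0
    · right; refine ⟨hb, ?_⟩
      have hf : f = g2 ^ 2 := eval_F_of_p1_zero F q₂ hFq₂ p hb
      rw [hf] at hH0
      have : (a ^ 2 + a * g1 + g2) ^ 2 = 0 := by linear_combination hH0
      exact pow_eq_zero_iff (by norm_num) |>.mp this
  · rintro (⟨ha, hf⟩ | ⟨hb, hg⟩)
    · rw [ha]; constructor
      · ring
      · linear_combination hf
    · have hf : f = g2 ^ 2 := eval_F_of_p1_zero F q₂ hFq₂ p hb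
      rw [hb, hf]; constructor
      · ring
      · linear_combination (a ^ 2 + a * g1 + g2) * hg
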